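/- Let Q be the A₃ quiver 1 ↔ 2 ↔ 3 (any orientation) with dimension vector d = (m, n, 1), and let Q_d be its leg-extended quiver with canonical dimension vector d̂. Then there is no dimension vector e ≤ d̂ lying in the fundamental domain F_{Q_d} with e_{(3,1)} = 1 and e_{(1,1)} = e_{(2,1)} = 1. (Key step: the fundamental-domain inequalities force e_{(i,k)} = k for i = 1,2 and all k, and then (e, (1,m)) ≤ 0 gives m + 1 ≤ n while (e, (2,n)) ≤ 0 gives n ≤ m, a contradiction.) -/

import Mathlib

/-!
At a vertex `(i,k)` strictly inside a leg of `Q_d` the inequality `(e, e_{(i,k)}) ≤ 0` reads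
`2 e_{(i,k)} ≤ e_{(i,k-1)} + e_{(i,k+1)}`, where `e_{(i,0)} := 0`; so `e` is convex along each
leg. As `e_{(i,1)} = 1`, every increment is at least `1`, hence `e_{(i,k)} ≥ k`, and `e ≤ d̂`
forces `e_{(i,k)} = k` on the first two legs. At the tops `(1,m)` and `(2,n)` the inequality
then reads `2m ≤ (m - 1) + n` and `2n ≤ (n - 1) + m + 1`, i.e. `m < n ≤ m`.
-/

section QuiverDefs

variable {V A : Type} [Fintype V] [Fintype A] [DecidableEq V]

/-- The Euler form of the quiver with arrows `a : s a → t a`. -/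
def eulerForm (s t : A → V) (d e : V → ℤ) : ℤ :=
  (∑ i, d i * e i) - ∑ a, d (s a) * e (t a)

/-- The symmetrized Euler form. -/
def symForm (s t : A → V) (d e : V → ℤ) : ℤ :=
  eulerForm s t d e + eulerForm s t e d

/-- The simple reflection at vertex `i`. -/
def reflAt (s t : A → V) (i : V) (d : V → ℤ) : V → ℤ :=
  fun j => d j - symForm s t d (Pi.single i 1) * ((Pi.single i 1 : V → ℤ) j)

def adjacent (s t : A → V) (i j : V) : Prop :=
  ∃ a, (s a = i ∧ t a = j) ∨ (s a = j ∧ t a = i)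

def connectedSupport (s t : A → V) (f : V → ℤ) : Prop :=
  ∀ i j, f i ≠ 0 → f j ≠ 0 →
    Relation.ReflTransGen (fun p q => adjacent s t p q ∧ f p ≠ 0 ∧ f q ≠ 0) i j

/-- Membership in the fundamental domain. -/
def inFund (s t : A → V) (f : V → ℤ) : Prop :=
  f ≠ 0 ∧ (∀ i, 0 ≤ f i) ∧ connectedSupport s t f ∧
    ∀ i, symForm s t f (Pi.single i 1) ≤ 0

/-- Imaginary roots: Weyl group translates of the fundamental domain. -/
inductive IsImaginaryRoot (s t : A → V) : (V → ℤ) → Prop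
  | fund (f) : inFund s t f → IsImaginaryRoot s t f
  | refl (i f) : IsImaginaryRoot s t f → IsImaginaryRoot s t (reflAt s t i f)

/-- Real roots: Weyl group translates of the coordinate vectors. -/
inductive IsRealRoot (s t : A → V) : (V → ℤ) → Prop
  | simple (i : V) : IsRealRoot s t (Pi.single i 1)
  | refl (i f) : IsRealRoot s t f → IsRealRoot s t (reflAt s t i f)

variable (s t : A → V)

/-- Vertices of the leg-extended quiver `Q_d`: pairs `(i,k)`, where `k : Fin (d i)`
represents the vertex `(i, k+1)` of the paper. -/
abbrev LegVertex (d : V → ℕ) : Type := Σ i : V, Fin (d i)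

/-- Leg arrows `β_{(i,k)} : (i,k) → (i,k+1)` of `Q_d`. -/
abbrev LegArrow (d : V → ℕ) : Type := Σ i : V, {k : Fin (d i) // (k : ℕ) + 1 < d i}

/-- The arrows of `Q_d` coming from arrows of `Q` (joining the tops of the legs). -/
abbrev OrigArrow (d : V → ℕ) : Type := {a : A // 0 < d (s a) ∧ 0 < d (t a)}

/-- Arrows of the leg-extended quiver `Q_d`. -/
abbrev QdArrow (d : V → ℕ) : Type := LegArrow d ⊕ OrigArrow s t d

/-- Source map of `Q_d`. -/
def QdSrc (d : V → ℕ) : QdArrow s t d → LegVertex d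
  | Sum.inl ⟨i, k, _⟩ => ⟨i, k⟩
  | Sum.inr ⟨a, h⟩ => ⟨s a, ⟨d (s a) - 1, by omega⟩⟩

/-- Target map of `Q_d`. -/
def QdTgt (d : V → ℕ) : QdArrow s t d → LegVertex d
  | Sum.inl ⟨i, k, h⟩ => ⟨i, ⟨(k : ℕ) + 1, h⟩⟩
  | Sum.inr ⟨a, h⟩ => ⟨t a, ⟨d (t a) - 1, by omega⟩⟩

end QuiverDefs

theorem symForm_single_right {V A : Type} [Fintype V] [Fintype A] [DecidableEq V]
    (s t : A → V) (f : V → ℤ) (w : V) :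
    symForm s t f (Pi.single w 1) =
      2 * f w - ∑ a, ((if t a = w then f (s a) else 0) + (if s a = w then f (t a) else 0)) := by
  simp only [symForm, eulerForm, Pi.single_apply, mul_ite, ite_mul, mul_one, mul_zero, one_mul,
    zero_mul, Finset.sum_ite_eq', Finset.mem_univ, if_true, Finset.sum_add_distrib]
  ring

theorem natCast_le_of_convex {g : ℕ → ℤ} {N : ℕ} (h0 : g 0 = 0) (h1 : 1 ≤ g 1)
    (hconv : ∀ k, k + 2 ≤ N → 2 * g (k + 1) ≤ g k + g (k + 2)) :
    ∀ k ≤ N, (k : ℤ) ≤ g k := by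
  have step : ∀ k, k + 1 ≤ N → (k : ℤ) + 1 ≤ g (k + 1) ∧ g k + 1 ≤ g (k + 1) := by
    intro k
    induction k with
    | zero => exact fun _ => by simpa [h0] using h1
    | succ k ih =>
      intro hk
      obtain ⟨ih₁, ih₂⟩ := ih (by omega)
      have := hconv k hk
      push_cast
      constructor <;> linarith
  rintro (_ | k) hk
  · simp [h0]
  · exact_mod_cast (step k hk).1

section LegValue

variable {V : Type} {d : V → ℕ}

theorem LegVertex.mk_eq_mk_iff {i j : V} {a : Fin (d i)} {b : Fin (d j)} :
    (⟨i, a⟩ : LegVertex d) = ⟨j, b⟩ ↔ i = j ∧ (a : ℕ) = b :=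
  Sigma.mk.inj_iff.trans (and_congr_right fun h => Fin.heq_ext_iff (congrArg d h))

/-- The value `e_{(i,k)}` in the paper's indexing, extended by `0` outside `1 ≤ k ≤ d i`. -/
def legValue (f : LegVertex d → ℤ) (i : V) (k : ℕ) : ℤ :=
  if h : 0 < k ∧ k ≤ d i then f ⟨i, ⟨k - 1, by omega⟩⟩ else 0

variable (f : LegVertex d → ℤ)

@[simp]
theorem legValue_zero (i : V) : legValue f i 0 = 0 := by
  simp [legValue]

theorem legValue_succ (i : V) (k : Fin (d i)) : legValue f i (k + 1) = f ⟨i, k⟩ := by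
  simp [legValue, k.isLt]

theorem legValue_top {i : V} (hi : 0 < d i) :
    legValue f i (d i) = f ⟨i, ⟨d i - 1, by omega⟩⟩ := by
  simp [legValue, hi]

theorem legValue_of_lt {i : V} {k : ℕ} (hk : d i < k) : legValue f i k = 0 := by
  rw [legValue, dif_neg (by omega)]

theorem legValue_le {f : LegVertex d → ℤ} (hf : ∀ w, f w ≤ (w.2 : ℕ) + 1) (i : V) (k : ℕ) :
    legValue f i k ≤ k := by
  unfold legValue
  split_ifs with h
  · have := hf ⟨i, ⟨k - 1, by omega⟩⟩
    simp only at this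
    omega
  · positivity

end LegValue

section LegExtended

variable {V A : Type} [DecidableEq V] (s t : A → V) (d : V → ℕ) (f : LegVertex d → ℤ)

theorem sum_legArrow_ite_qdTgt [Fintype V] (w : LegVertex d) :
    ∑ a : LegArrow d, (if QdTgt s t d (.inl a) = w then f (QdSrc s t d (.inl a)) else 0) =
      legValue f w.1 w.2 := by
  obtain ⟨i, k, hk⟩ := w
  rcases k with _ | k
  · refine (Finset.sum_eq_zero fun ⟨j, ⟨l, hl⟩, h⟩ _ => if_neg ?_).trans (legValue_zero f i).symm
    simp only [QdTgt, LegVertex.mk_eq_mk_iff]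
    omega
  · rw [Fintype.sum_eq_single ⟨i, ⟨k, by omega⟩, hk⟩]
    · exact (if_pos rfl).trans (legValue_succ f i ⟨k, by omega⟩).symm
    rintro ⟨j, ⟨l, hl⟩, h⟩ hne
    refine if_neg fun heq => hne ?_
    obtain ⟨rfl, hlk⟩ := LegVertex.mk_eq_mk_iff.mp heq
    simp only [Nat.add_right_cancel_iff] at hlk
    subst hlk
    rfl

theorem sum_legArrow_ite_qdSrc [Fintype V] (w : LegVertex d) :
    ∑ a : LegArrow d, (if QdSrc s t d (.inl a) = w then f (QdTgt s t d (.inl a)) else 0) =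
      legValue f w.1 (w.2 + 2) := by
  obtain ⟨i, k, hk⟩ := w
  by_cases htop : k + 1 < d i
  · rw [Fintype.sum_eq_single ⟨i, ⟨k, hk⟩, htop⟩]
    · exact (if_pos rfl).trans (legValue_succ f i ⟨k + 1, htop⟩).symm
    rintro ⟨j, ⟨l, hl⟩, h⟩ hne
    refine if_neg fun heq => hne ?_
    obtain ⟨rfl, hlk⟩ := LegVertex.mk_eq_mk_iff.mp heq
    simp only at hlk
    subst hlk
    rfl
  · refine (Finset.sum_eq_zero fun ⟨j, ⟨l, hl⟩, h⟩ _ => if_neg ?_).trans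
      (legValue_of_lt f (by simp only; omega)).symm
    simp only [QdSrc, LegVertex.mk_eq_mk_iff]
    rintro ⟨rfl, rfl⟩
    exact htop h

theorem sum_origArrow_ite [Fintype A] (w : LegVertex d) :
    ∑ b : OrigArrow s t d,
      ((if QdTgt s t d (.inr b) = w then f (QdSrc s t d (.inr b)) else 0) +
        (if QdSrc s t d (.inr b) = w then f (QdTgt s t d (.inr b)) else 0)) =
      if (w.2 : ℕ) + 1 = d w.1 then
        ∑ b : OrigArrow s t d,
          ((if t b.1 = w.1 then legValue f (s b.1) (d (s b.1)) else 0) +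
            (if s b.1 = w.1 then legValue f (t b.1) (d (t b.1)) else 0))
      else 0 := by
  obtain ⟨i, k, hk⟩ := w
  dsimp only
  split_ifs with htop
  · refine Finset.sum_congr rfl fun ⟨a, hs, ht⟩ _ => ?_
    simp only [QdTgt, QdSrc, LegVertex.mk_eq_mk_iff, legValue_top f hs, legValue_top f ht]
    congr 1 <;> refine if_congr ⟨fun h => h.1, fun h => ⟨h, ?_⟩⟩ rfl rfl <;> subst h <;> omega
  · refine Finset.sum_eq_zero fun ⟨a, hs, ht⟩ _ => ?_
    simp only [QdTgt, QdSrc, LegVertex.mk_eq_mk_iff]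
    rw [if_neg (by rintro ⟨rfl, rfl⟩; omega), if_neg (by rintro ⟨rfl, rfl⟩; omega), add_zero]

theorem symForm_qd_single [Fintype V] [Fintype A] (w : LegVertex d) :
    symForm (QdSrc s t d) (QdTgt s t d) f (Pi.single w 1) =
      2 * f w - legValue f w.1 w.2 - legValue f w.1 (w.2 + 2) -
        if (w.2 : ℕ) + 1 = d w.1 then
          ∑ b : OrigArrow s t d,
            ((if t b.1 = w.1 then legValue f (s b.1) (d (s b.1)) else 0) +
              (if s b.1 = w.1 then legValue f (t b.1) (d (t b.1)) else 0))
        else 0 := by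
  rw [symForm_single_right, Fintype.sum_sum_type, Finset.sum_add_distrib,
    sum_legArrow_ite_qdTgt, sum_legArrow_ite_qdSrc, sum_origArrow_ite]
  ring

variable [Fintype V] [Fintype A] {s t d f}

theorem two_mul_legValue_le
    (hf : ∀ w, symForm (QdSrc s t d) (QdTgt s t d) f (Pi.single w 1) ≤ 0)
    {i : V} {k : ℕ} (hk : k + 1 < d i) :
    2 * legValue f i (k + 1) ≤ legValue f i k + legValue f i (k + 2) := by
  have h := hf ⟨i, ⟨k, by omega⟩⟩
  rw [symForm_qd_single, if_neg (by dsimp only; omega), ← legValue_succ f i ⟨k, by omega⟩] at h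
  linarith

theorem two_mul_legValue_top_le
    (hf : ∀ w, symForm (QdSrc s t d) (QdTgt s t d) f (Pi.single w 1) ≤ 0)
    {i : V} (hi : 0 < d i) :
    2 * legValue f i (d i) ≤ legValue f i (d i - 1) +
      ∑ b : OrigArrow s t d,
        ((if t b.1 = i then legValue f (s b.1) (d (s b.1)) else 0) +
          (if s b.1 = i then legValue f (t b.1) (d (t b.1)) else 0)) := by
  have h := hf ⟨i, ⟨d i - 1, by omega⟩⟩
  rw [symForm_qd_single] at h
  dsimp only at h
  rw [if_pos (by omega), ← legValue_top f hi,
    legValue_of_lt f (show d i < d i - 1 + 2 by omega)] at h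
  linarith

end LegExtended

theorem sum_origArrow_of_forall_pos {V A : Type} [Fintype A] {s t : A → V} {d : V → ℕ}
    (h : ∀ a, 0 < d (s a) ∧ 0 < d (t a)) (g : OrigArrow s t d → ℤ) :
    ∑ b, g b = ∑ a, g ⟨a, h a⟩ :=
  Fintype.sum_equiv (Equiv.subtypeUnivEquiv h) _ _ fun _ => rfl

/-- Theorem 4.2, key computation: for the `A₃` quiver `1 ↔ 2 ↔ 3` with dimension
vector `d = (m,n,1)`, there is no dimension vector `e ≤ d̂` in the fundamental
domain of the leg-extended quiver `Q_d` with `e_{(3,1)} = e_{(1,1)} = e_{(2,1)} = 1`.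
(Vertices `(i,k)` of the paper correspond to `⟨i-1, k-1⟩` here, and
`d̂_{(i,k)} = k` becomes `w.2 + 1`.) -/
theorem no_fundamental_root_A3 (m n : ℕ) (hm : 1 ≤ m) (hn : 1 ≤ n) :
    ¬ ∃ f : LegVertex (![m, n, 1] : Fin 3 → ℕ) → ℤ,
      inFund (QdSrc (![0, 1] : Fin 2 → Fin 3) (![1, 2] : Fin 2 → Fin 3) ![m, n, 1])
             (QdTgt (![0, 1] : Fin 2 → Fin 3) (![1, 2] : Fin 2 → Fin 3) ![m, n, 1]) f ∧
      (∀ w : LegVertex (![m, n, 1] : Fin 3 → ℕ), f w ≤ (w.2 : ℕ) + 1) ∧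
      f ⟨2, ⟨0, by exact Nat.one_pos⟩⟩ = 1 ∧
      f ⟨0, ⟨0, by exact hm⟩⟩ = 1 ∧
      f ⟨1, ⟨0, by exact hn⟩⟩ = 1 := by
  rintro ⟨f, ⟨-, -, -, hf⟩, hle, h2, h0, h1⟩
  have leg : ∀ i, legValue f i 1 = 1 → ∀ k ≤ (![m, n, 1] : Fin 3 → ℕ) i, legValue f i k = k :=
    fun i hi k hk => le_antisymm (legValue_le hle i k)
      (natCast_le_of_convex (legValue_zero f i) hi.ge
        (fun _ hk => two_mul_legValue_le hf (by omega)) k hk)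
  have leg0 : ∀ k ≤ m, legValue f 0 k = k := leg 0 ((legValue_succ f 0 ⟨0, hm⟩).trans h0)
  have leg1 : ∀ k ≤ n, legValue f 1 k = k := leg 1 ((legValue_succ f 1 ⟨0, hn⟩).trans h1)
  have top2 : legValue f 2 1 = 1 := (legValue_succ f 2 ⟨0, Nat.one_pos⟩).trans h2
  have hpos : ∀ a, 0 < (![m, n, 1] : Fin 3 → ℕ) ((![0, 1] : Fin 2 → Fin 3) a) ∧
      0 < (![m, n, 1] : Fin 3 → ℕ) ((![1, 2] : Fin 2 → Fin 3) a) := by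
    intro a; fin_cases a <;> simp <;> omega
  have top0 := two_mul_legValue_top_le hf (i := 0) hm
  have top1 := two_mul_legValue_top_le hf (i := 1) hn
  rw [sum_origArrow_of_forall_pos hpos, Fin.sum_univ_two] at top0 top1
  simp only [Fin.isValue, Matrix.cons_val_zero, Matrix.cons_val_one, Matrix.cons_val_fin_one,
    Matrix.cons_val, Fin.reduceEq, one_ne_zero, zero_ne_one, ↓reduceIte, zero_add, add_zero]
    at top0 top1
  rw [leg0 m le_rfl, leg0 (m - 1) (by omega), leg1 n le_rfl] at top0
  rw [leg1 n le_rfl, leg1 (n - 1) (by omega), leg0 m le_rfl, top2] at top1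
  omega
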